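/- arXiv:2509.11174 — 3 statements merged into one kernel-verified Lean document; each statement's English description precedes it below -/
import Mathlib

section
/- Assume F(u) = F u + f is affine with F ∈ R^{O×D}, f ∈ R^O, prior N(μ_pr, Γ_pr) and noise N(μ_E, Γ_E) Gaussian with SPD covariances, and y ∈ R^O. Let α ∈ (0,1) and let (μ̂, Γ̂) with Γ̂ SPD be a stationary point of L_α(μ, Γ) = (1−α)(‖μ−μ_pr‖²_{Γ⁻¹} + tr(Γ⁻¹Γ_pr)) + α(‖μ−μ_pr‖²_{Γ_pr⁻¹} + tr(Γ_pr⁻¹Γ)) + α(‖y − μ_E − Fμ − f‖²_{Γ_E⁻¹} + tr(Γ_E⁻¹FΓFᵀ)). Define A = ((1−α)/α)((μ̂−μ_pr)(μ̂−μ_pr)ᵀ + Γ_pr), μ_post = ((1−α)/α) Γ_Lap Γ̂⁻¹ (μ̂ − μ_pr) + μ̂ and Γ_post = Γ̂ A⁻¹ Γ̂. Then μ_post = u_MAP and Γ_post = Γ_Lap, where Γ_Lap = (Fᵀ Γ_E⁻¹ F + Γ_pr⁻¹)⁻¹ and u_MAP = Γ_Lap(Fᵀ Γ_E⁻¹ (y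 − f − μ_E) + Γ_pr⁻¹ μ_pr). -/
/-!
Along a line `μ̂ + t h` the loss is a sum of quadratic forms, so stationarity in `μ` is the normal
equation `(1 - α) Γ̂⁻¹ v + α Γ_pr⁻¹ v = α Fᵀ Γ_E⁻¹ (y - μ_E - F μ̂ - f)`, where `v = μ̂ - μ_pr`.
As a function of the Cholesky factor, `L_α(μ̂, C) = tr(Γ⁻¹ P) + tr(Q Γ) + const` with `Γ = C Cᵀ`,
`P = (1 - α)(v vᵀ + Γ_pr)` and `Q = α Γ_Lap⁻¹`. Its derivative in the direction `H` is
`tr(S (H Cᵀ + C Hᵀ))` with `S = Q - Γ⁻¹ P Γ⁻¹` symmetric; for `H = S C` this is `2 ‖S C‖²_F`, so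
`S = 0`, i.e. `Γ̂ Γ_Lap⁻¹ Γ̂ = A`, which is `Γ_post = Γ_Lap`. Multiplying `μ_post` by `Γ_Lap⁻¹` and
inserting the normal equation gives `Γ_Lap⁻¹ u_MAP`.
-/

open Matrix

-- Any norm would do: the statements below only involve the product topology on matrices.
attribute [local instance] Matrix.linftyOpNormedRing Matrix.linftyOpNormedAlgebra

theorem hasDerivAt_add_smul_zero {F : Type*} [NormedAddCommGroup F] [NormedSpace ℝ F]
    (x v : F) : HasDerivAt (fun t : ℝ => x + t • v) v 0 :=
  (((hasDerivAt_id (0 : ℝ)).smul_const v).const_add x).congr_deriv (one_smul ℝ v)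

theorem HasFDerivAt.hasDerivAt_add_smul_of_eq_zero {E : Type*} [NormedAddCommGroup E]
    [NormedSpace ℝ E] {L : E → ℝ} {p : E} (h : HasFDerivAt L (0 : E →L[ℝ] ℝ) p) (v : E) :
    HasDerivAt (fun t : ℝ => L (p + t • v)) 0 0 :=
  h.comp_hasDerivAt_of_eq 0 (hasDerivAt_add_smul_zero p v) (by simp)

theorem hasDerivAt_quadratic_zero (a b c : ℝ) :
    HasDerivAt (fun t : ℝ => a + t * b + t ^ 2 * c) b 0 :=
  ((((hasDerivAt_id (0 : ℝ)).mul_const b).const_add a).add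
    ((hasDerivAt_pow 2 (0 : ℝ)).mul_const c)).congr_deriv (by simp)

theorem hasDerivAt_dotProduct_mulVec_line {n : Type*} [Fintype n] {M : Matrix n n ℝ}
    (hM : M.IsSymm) (a b : n → ℝ) :
    HasDerivAt (fun t : ℝ => (a + t • b) ⬝ᵥ M *ᵥ (a + t • b)) (2 * (b ⬝ᵥ M *ᵥ a)) 0 := by
  have hswap : a ⬝ᵥ M *ᵥ b = b ⬝ᵥ M *ᵥ a := by
    rw [dotProduct_mulVec, ← mulVec_transpose, hM.eq, dotProduct_comm]
  have hexpand : (fun t : ℝ => (a + t • b) ⬝ᵥ M *ᵥ (a + t • b)) =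
      fun t => a ⬝ᵥ M *ᵥ a + t * (2 * (b ⬝ᵥ M *ᵥ a)) + t ^ 2 * (b ⬝ᵥ M *ᵥ b) := by
    funext t
    simp only [mulVec_add, mulVec_smul, dotProduct_add, add_dotProduct, dotProduct_smul,
      smul_dotProduct, smul_eq_mul, hswap]
    ring
  rw [hexpand]
  exact hasDerivAt_quadratic_zero _ _ _

theorem Matrix.PosDef.isSymm {n : Type*} {M : Matrix n n ℝ} (hM : M.PosDef) : M.IsSymm :=
  isHermitian_iff_isSymm.mp hM.isHermitian

section

variable {n : Type*} [Fintype n] [DecidableEq n]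

theorem HasDerivAt.matrix_trace {M : ℝ → Matrix n n ℝ} {M' : Matrix n n ℝ} {t : ℝ}
    (h : HasDerivAt M M' t) : HasDerivAt (fun s => (M s).trace) M'.trace t := by
  have htrace : HasFDerivAt (𝕜 := ℝ) (fun X : Matrix n n ℝ => X.trace)
      (traceLinearMap n ℝ ℝ).toContinuousLinearMap (M t) :=
    (traceLinearMap n ℝ ℝ).toContinuousLinearMap.hasFDerivAt
  exact htrace.comp_hasDerivAt t h

theorem HasDerivAt.matrix_inv {M : ℝ → Matrix n n ℝ} {M' : Matrix n n ℝ} {t : ℝ}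
    (h : HasDerivAt M M' t) (hM : IsUnit (M t)) :
    HasDerivAt (fun s => (M s)⁻¹) (-((M t)⁻¹ * M' * (M t)⁻¹)) t := by
  have : CompleteSpace (Matrix n n ℝ) := FiniteDimensional.complete ℝ _
  obtain ⟨u, hu⟩ := hM
  have hinv := hasFDerivAt_ringInverse (𝕜 := ℝ) u
  rw [hu] at hinv
  have hcomp := hinv.comp_hasDerivAt t h
  simp only [Function.comp_def, ← nonsing_inv_eq_ringInverse, _root_.neg_apply,
    ContinuousLinearMap.mulLeftRight_apply, coe_units_inv, hu] at hcomp
  exact hcomp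

theorem hasDerivAt_mul_transpose_line (C H : Matrix n n ℝ) :
    HasDerivAt (fun t : ℝ => (C + t • H) * (C + t • H)ᵀ) (H * Cᵀ + C * Hᵀ) 0 := by
  simp only [transpose_add, transpose_smul]
  exact ((hasDerivAt_add_smul_zero C H).mul (hasDerivAt_add_smul_zero Cᵀ Hᵀ)).congr_deriv
    (by simp)

theorem hasDerivAt_trace_inv_mul_add_trace_mul_line {C : Matrix n n ℝ} (hC : IsUnit (C * Cᵀ))
    (P Q H : Matrix n n ℝ) :
    HasDerivAt (fun t : ℝ => (((C + t • H) * (C + t • H)ᵀ)⁻¹ * P).trace +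
        (Q * ((C + t • H) * (C + t • H)ᵀ)).trace)
      (((Q - (C * Cᵀ)⁻¹ * P * (C * Cᵀ)⁻¹) * (H * Cᵀ + C * Hᵀ)).trace) 0 := by
  have hG := hasDerivAt_mul_transpose_line C H
  have hG0 : (C + (0 : ℝ) • H) * (C + (0 : ℝ) • H)ᵀ = C * Cᵀ := by simp
  have hGinv := hG.matrix_inv (hG0 ▸ hC)
  rw [hG0] at hGinv
  refine ((hGinv.mul_const P).matrix_trace.add (hG.const_mul Q).matrix_trace).congr_deriv ?_
  rw [sub_mul, trace_sub, neg_mul, trace_neg, Matrix.mul_assoc _ _ P, trace_mul_cycle]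
  ring

theorem Matrix.IsSymm.eq_zero_of_forall_trace_mul_eq_zero {S C : Matrix n n ℝ} (hS : S.IsSymm)
    (hC : IsUnit (C * Cᵀ)) (h : ∀ H, (S * (H * Cᵀ + C * Hᵀ)).trace = 0) : S = 0 := by
  have hSC : S * C = 0 := by
    have hsq : (S * (S * C * Cᵀ)).trace = ((S * C) * (S * C)ᵀ).trace := by
      rw [trace_mul_comm, transpose_mul, hS.eq]
      simp only [Matrix.mul_assoc]
    have := h (S * C)
    rw [Matrix.mul_add, trace_add, hsq, ← Matrix.mul_assoc, ← two_mul, mul_eq_zero,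
      or_iff_right two_ne_zero, ← conjTranspose_eq_transpose_of_trivial,
      trace_mul_conjTranspose_self_eq_zero_iff] at this
    exact this
  calc S = S * (C * Cᵀ) * (C * Cᵀ)⁻¹ :=
        (mul_nonsing_inv_cancel_right _ _ ((isUnit_iff_isUnit_det _).mp hC)).symm
    _ = 0 := by rw [← Matrix.mul_assoc S C, hSC, Matrix.zero_mul, Matrix.zero_mul]

theorem eq_inv_mul_mul_inv_of_forall_hasDerivAt_zero {C P Q : Matrix n n ℝ} (hP : P.IsSymm)
    (hQ : Q.IsSymm) (hC : IsUnit (C * Cᵀ))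
    (h : ∀ H, HasDerivAt (fun t : ℝ => (((C + t • H) * (C + t • H)ᵀ)⁻¹ * P).trace +
        (Q * ((C + t • H) * (C + t • H)ᵀ)).trace) 0 0) :
    Q = (C * Cᵀ)⁻¹ * P * (C * Cᵀ)⁻¹ := by
  have hGinv : ((C * Cᵀ)⁻¹).IsSymm := (isSymm_mul_transpose_self C).inv
  have hS : (Q - (C * Cᵀ)⁻¹ * P * (C * Cᵀ)⁻¹).IsSymm := by
    refine hQ.sub ?_
    simp only [IsSymm, transpose_mul, hGinv.eq, hP.eq, Matrix.mul_assoc]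
  exact sub_eq_zero.mp <| IsSymm.eq_zero_of_forall_trace_mul_eq_zero hS hC fun H =>
    (hasDerivAt_trace_inv_mul_add_trace_mul_line hC P Q H).unique (h H)

theorem mul_inv_smul_mul_eq_inv {Γ K W : Matrix n n ℝ} {a b : ℝ} (hΓ : IsUnit Γ.det)
    (ha : a ≠ 0) (h : a • K = Γ⁻¹ * (b • W) * Γ⁻¹) : Γ * ((b / a) • W)⁻¹ * Γ = K⁻¹ := by
  have hW : (b / a) • W = Γ * K * Γ := by
    have hconj : Γ * (a • K) * Γ = b • W := by
      rw [h, ← Matrix.mul_assoc, mul_nonsing_inv_cancel_left _ _ hΓ,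
        nonsing_inv_mul_cancel_right _ _ hΓ]
    rw [div_eq_inv_mul, ← smul_smul, ← hconj, Matrix.mul_smul, Matrix.smul_mul, smul_smul,
      inv_mul_cancel₀ ha, one_smul]
  rw [hW, Matrix.mul_inv_rev, Matrix.mul_inv_rev, mul_nonsing_inv_cancel_left _ _ hΓ,
    nonsing_inv_mul_cancel_right _ _ hΓ]

end

section

variable {n o : Type*} [Fintype n] [DecidableEq n] [Fintype o] [DecidableEq o]

/-- The loss `L_α` of the paper, with the covariance given by its Cholesky factor: `Γ = C Cᵀ`. -/
noncomputable def alphaLoss (F : Matrix o n ℝ) (f y μE : o → ℝ) (μpr : n → ℝ)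
    (Γpr : Matrix n n ℝ) (ΓE : Matrix o o ℝ) (α : ℝ) (p : (n → ℝ) × (n → n → ℝ)) : ℝ :=
  (1 - α) * ((p.1 - μpr) ⬝ᵥ (Matrix.of p.2 * (Matrix.of p.2)ᵀ)⁻¹ *ᵥ (p.1 - μpr) +
      ((Matrix.of p.2 * (Matrix.of p.2)ᵀ)⁻¹ * Γpr).trace) +
    α * ((p.1 - μpr) ⬝ᵥ Γpr⁻¹ *ᵥ (p.1 - μpr) +
      (Γpr⁻¹ * (Matrix.of p.2 * (Matrix.of p.2)ᵀ)).trace) +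
    α * ((y - μE - F *ᵥ p.1 - f) ⬝ᵥ ΓE⁻¹ *ᵥ (y - μE - F *ᵥ p.1 - f) +
      (ΓE⁻¹ * F * (Matrix.of p.2 * (Matrix.of p.2)ᵀ) * Fᵀ).trace)

variable {F : Matrix o n ℝ} {f y μE : o → ℝ} {μpr : n → ℝ} {Γpr : Matrix n n ℝ}
  {ΓE : Matrix o o ℝ} {α : ℝ}

theorem hasDerivAt_alphaLoss_add_smul_fst (hΓpr : Γpr.IsSymm) (hΓE : ΓE.IsSymm)
    (μ : n → ℝ) (C : n → n → ℝ) (h : n → ℝ) :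
    HasDerivAt (fun t : ℝ => alphaLoss F f y μE μpr Γpr ΓE α ((μ, C) + t • (h, 0)))
      (2 * (h ⬝ᵥ ((1 - α) • ((of C * (of C)ᵀ)⁻¹ *ᵥ (μ - μpr)) + α • (Γpr⁻¹ *ᵥ (μ - μpr)) -
        α • (Fᵀ *ᵥ (ΓE⁻¹ *ᵥ (y - μE - F *ᵥ μ - f)))))) 0 := by
  set G := of C * (of C)ᵀ
  set v := μ - μpr with hv_def
  set r := y - μE - F *ᵥ μ - f with hr_def
  have hline : (fun t : ℝ => alphaLoss F f y μE μpr Γpr ΓE α ((μ, C) + t • (h, 0))) =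
      fun t => (1 - α) * ((v + t • h) ⬝ᵥ G⁻¹ *ᵥ (v + t • h) + (G⁻¹ * Γpr).trace) +
        α * ((v + t • h) ⬝ᵥ Γpr⁻¹ *ᵥ (v + t • h) + (Γpr⁻¹ * G).trace) +
        α * ((r + t • -(F *ᵥ h)) ⬝ᵥ ΓE⁻¹ *ᵥ (r + t • -(F *ᵥ h)) + (ΓE⁻¹ * F * G * Fᵀ).trace) := by
    funext t
    have hv : μ + t • h - μpr = v + t • h := by rw [hv_def]; abel
    have hr : y - μE - F *ᵥ (μ + t • h) - f = r + t • -(F *ᵥ h) := by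
      rw [hr_def, mulVec_add, mulVec_smul, smul_neg]; abel
    simp only [alphaLoss, Prod.fst_add, Prod.snd_add, Prod.smul_mk, smul_zero, add_zero, hv, hr]
    rfl
  rw [hline]
  have hGinv : (G⁻¹).IsSymm := (isSymm_mul_transpose_self (of C)).inv
  have hqG := hasDerivAt_dotProduct_mulVec_line hGinv v h
  have hqpr := hasDerivAt_dotProduct_mulVec_line hΓpr.inv v h
  have hqE := hasDerivAt_dotProduct_mulVec_line hΓE.inv r (-(F *ᵥ h))
  refine ((((hqG.add_const _).const_mul (1 - α)).add ((hqpr.add_const _).const_mul α)).add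
    ((hqE.add_const _).const_mul α)).congr_deriv ?_
  have hadj : h ⬝ᵥ Fᵀ *ᵥ (ΓE⁻¹ *ᵥ r) = (F *ᵥ h) ⬝ᵥ ΓE⁻¹ *ᵥ r := by
    rw [mulVec_transpose, dotProduct_comm, ← dotProduct_mulVec, dotProduct_comm]
  simp only [neg_dotProduct, dotProduct_sub, dotProduct_add, dotProduct_smul, smul_eq_mul, hadj]
  ring

theorem alphaLoss_add_smul_snd (μ : n → ℝ) (C : n → n → ℝ) (H : Matrix n n ℝ) (t : ℝ) :
    alphaLoss F f y μE μpr Γpr ΓE α ((μ, C) + t • (0, of.symm H)) =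
      (((of C + t • H) * (of C + t • H)ᵀ)⁻¹ *
          ((1 - α) • (vecMulVec (μ - μpr) (μ - μpr) + Γpr))).trace +
        ((α • (Fᵀ * ΓE⁻¹ * F + Γpr⁻¹)) * ((of C + t • H) * (of C + t • H)ᵀ)).trace +
        α * ((μ - μpr) ⬝ᵥ Γpr⁻¹ *ᵥ (μ - μpr) +
          (y - μE - F *ᵥ μ - f) ⬝ᵥ ΓE⁻¹ *ᵥ (y - μE - F *ᵥ μ - f)) := by
  have hcycle : ∀ G : Matrix n n ℝ, (ΓE⁻¹ * F * G * Fᵀ).trace = (Fᵀ * ΓE⁻¹ * F * G).trace :=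
    fun G => by rw [trace_mul_cycle, ← Matrix.mul_assoc Fᵀ]
  simp only [alphaLoss, Prod.fst_add, Prod.snd_add, Prod.smul_mk, smul_zero, add_zero,
    ← of_add_of, ← smul_of, Equiv.apply_symm_apply, hcycle]
  generalize (of C + t • H) * (of C + t • H)ᵀ = G
  simp only [Matrix.mul_smul, Matrix.smul_mul, trace_smul, Matrix.mul_add, Matrix.add_mul,
    trace_add, mul_vecMulVec, trace_vecMulVec, smul_eq_mul, dotProduct_comm (G⁻¹ *ᵥ _)]
  ring

theorem alphaLoss_normal_eq_of_hasFDerivAt (hΓpr : Γpr.IsSymm) (hΓE : ΓE.IsSymm)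
    {μ : n → ℝ} {C : n → n → ℝ}
    (hstat : HasFDerivAt (alphaLoss F f y μE μpr Γpr ΓE α) (0 : _ →L[ℝ] ℝ) (μ, C)) :
    (1 - α) • ((of C * (of C)ᵀ)⁻¹ *ᵥ (μ - μpr)) + α • (Γpr⁻¹ *ᵥ (μ - μpr)) =
      α • (Fᵀ *ᵥ (ΓE⁻¹ *ᵥ (y - μE - F *ᵥ μ - f))) := by
  set g := (1 - α) • ((of C * (of C)ᵀ)⁻¹ *ᵥ (μ - μpr)) + α • (Γpr⁻¹ *ᵥ (μ - μpr)) -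
    α • (Fᵀ *ᵥ (ΓE⁻¹ *ᵥ (y - μE - F *ᵥ μ - f)))
  have hg : 2 * (g ⬝ᵥ g) = 0 :=
    (hasDerivAt_alphaLoss_add_smul_fst hΓpr hΓE μ C g).unique
      (hstat.hasDerivAt_add_smul_of_eq_zero (g, 0))
  rw [mul_eq_zero, or_iff_right two_ne_zero, dotProduct_self_eq_zero, sub_eq_zero] at hg
  exact hg

theorem alphaLoss_precision_eq_of_hasFDerivAt (hΓpr : Γpr.IsSymm) (hΓE : ΓE.IsSymm)
    {μ : n → ℝ} {C : n → n → ℝ} (hC : IsUnit (of C * (of C)ᵀ))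
    (hstat : HasFDerivAt (alphaLoss F f y μE μpr Γpr ΓE α) (0 : _ →L[ℝ] ℝ) (μ, C)) :
    α • (Fᵀ * ΓE⁻¹ * F + Γpr⁻¹) = (of C * (of C)ᵀ)⁻¹ *
      ((1 - α) • (vecMulVec (μ - μpr) (μ - μpr) + Γpr)) * (of C * (of C)ᵀ)⁻¹ := by
  have hP : ((1 - α) • (vecMulVec (μ - μpr) (μ - μpr) + Γpr)).IsSymm :=
    (IsSymm.add (transpose_vecMulVec _ _) hΓpr).smul _
  have hQ : (α • (Fᵀ * ΓE⁻¹ * F + Γpr⁻¹)).IsSymm := by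
    refine IsSymm.smul (IsSymm.add ?_ hΓpr.inv) _
    simp only [IsSymm, transpose_mul, transpose_transpose, hΓE.inv.eq, Matrix.mul_assoc]
  refine eq_inv_mul_mul_inv_of_forall_hasDerivAt_zero hP hQ hC fun H => ?_
  have hline := hstat.hasDerivAt_add_smul_of_eq_zero (0, of.symm H)
  simp only [alphaLoss_add_smul_snd] at hline
  exact (hasDerivAt_add_const_iff _).mp hline

theorem smul_inv_mulVec_add_eq_of_normal_eq {F : Matrix o n ℝ} {Γ Γpr : Matrix n n ℝ}
    {ΓE : Matrix o o ℝ} {μ μpr : n → ℝ} {w : o → ℝ} {a : ℝ} (ha : a ≠ 0)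
    (hK : IsUnit (Fᵀ * ΓE⁻¹ * F + Γpr⁻¹))
    (h : (1 - a) • (Γ⁻¹ *ᵥ (μ - μpr)) + a • (Γpr⁻¹ *ᵥ (μ - μpr)) =
      a • (Fᵀ *ᵥ (ΓE⁻¹ *ᵥ (w - F *ᵥ μ)))) :
    ((1 - a) / a) • ((Fᵀ * ΓE⁻¹ * F + Γpr⁻¹)⁻¹ *ᵥ (Γ⁻¹ *ᵥ (μ - μpr))) + μ =
      (Fᵀ * ΓE⁻¹ * F + Γpr⁻¹)⁻¹ *ᵥ (Fᵀ *ᵥ (ΓE⁻¹ *ᵥ w) + Γpr⁻¹ *ᵥ μpr) := by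
  set K := Fᵀ * ΓE⁻¹ * F + Γpr⁻¹
  have hKK : ∀ z, K *ᵥ (K⁻¹ *ᵥ z) = z := fun z => by
    rw [mulVec_mulVec, mul_nonsing_inv _ ((isUnit_iff_isUnit_det K).mp hK), one_mulVec]
  have hcorr : ((1 - a) / a) • (Γ⁻¹ *ᵥ (μ - μpr)) =
      Fᵀ *ᵥ (ΓE⁻¹ *ᵥ (w - F *ᵥ μ)) - Γpr⁻¹ *ᵥ (μ - μpr) := by
    rw [div_eq_inv_mul, ← smul_smul, eq_sub_iff_add_eq, ← inv_smul_smul₀ ha (Γpr⁻¹ *ᵥ _),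
      ← smul_add, h, inv_smul_smul₀ ha]
  apply mulVec_injective_of_isUnit hK
  rw [mulVec_add, mulVec_smul, hKK, hKK, hcorr]
  simp only [K, add_mulVec, ← mulVec_mulVec, mulVec_sub]
  abel

end

/-- Theorem `thm:convergence`: for the affine forward map
`F(u) = F u + f`, with Gaussian prior `N(μ_pr, Γ_pr)` and noise `N(μ_E, Γ_E)` (SPD
covariances), if `(μ̂, Γ̂)` (with `Γ̂ = Ĉ Ĉᵀ` SPD) is a stationary point of the loss `L_α`,
then `μ_post = ((1−α)/α) Γ_Lap Γ̂⁻¹ (μ̂ − μ_pr) + μ̂` equals `u_MAP` and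
`Γ_post = Γ̂ A⁻¹ Γ̂` equals `Γ_Lap`, where
`A = ((1−α)/α)((μ̂−μ_pr)(μ̂−μ_pr)ᵀ + Γ_pr)`. -/
theorem stmt5 {D O : ℕ} (Fm : Matrix (Fin O) (Fin D) ℝ) (f y μE : Fin O → ℝ)
    (μpr : Fin D → ℝ) (Γpr : Matrix (Fin D) (Fin D) ℝ) (hΓpr : Γpr.PosDef)
    (ΓE : Matrix (Fin O) (Fin O) ℝ) (hΓE : ΓE.PosDef)
    (α : ℝ) (hα : α ∈ Set.Ioo (0 : ℝ) 1)
    (L : (Fin D → ℝ) × (Fin D → Fin D → ℝ) → ℝ)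
    (hL : ∀ p : (Fin D → ℝ) × (Fin D → Fin D → ℝ),
      L p =
        (1 - α) * ((p.1 - μpr) ⬝ᵥ (Matrix.of p.2 * (Matrix.of p.2)ᵀ)⁻¹ *ᵥ (p.1 - μpr) +
            ((Matrix.of p.2 * (Matrix.of p.2)ᵀ)⁻¹ * Γpr).trace) +
        α * ((p.1 - μpr) ⬝ᵥ Γpr⁻¹ *ᵥ (p.1 - μpr) +
            (Γpr⁻¹ * (Matrix.of p.2 * (Matrix.of p.2)ᵀ)).trace) +
        α * ((y - μE - Fm *ᵥ p.1 - f) ⬝ᵥ ΓE⁻¹ *ᵥ (y - μE - Fm *ᵥ p.1 - f) +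
            (ΓE⁻¹ * Fm * (Matrix.of p.2 * (Matrix.of p.2)ᵀ) * Fmᵀ).trace))
    (μhat : Fin D → ℝ) (Chat : Fin D → Fin D → ℝ)
    (hstat : HasFDerivAt L (0 : ((Fin D → ℝ) × (Fin D → Fin D → ℝ)) →L[ℝ] ℝ) (μhat, Chat))
    (Γhat : Matrix (Fin D) (Fin D) ℝ) (hΓhat : Γhat = Matrix.of Chat * (Matrix.of Chat)ᵀ)
    (hΓhatPD : Γhat.PosDef)
    (A : Matrix (Fin D) (Fin D) ℝ)
    (hA : A = ((1 - α) / α) • (vecMulVec (μhat - μpr) (μhat - μpr) + Γpr))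
    (μpost : Fin D → ℝ)
    (hμpost : μpost = ((1 - α) / α) •
      ((Fmᵀ * ΓE⁻¹ * Fm + Γpr⁻¹)⁻¹ *ᵥ (Γhat⁻¹ *ᵥ (μhat - μpr))) + μhat)
    (Γpost : Matrix (Fin D) (Fin D) ℝ) (hΓpost : Γpost = Γhat * A⁻¹ * Γhat)
    (ΓLap : Matrix (Fin D) (Fin D) ℝ) (hΓLap : ΓLap = (Fmᵀ * ΓE⁻¹ * Fm + Γpr⁻¹)⁻¹)
    (uMAP : Fin D → ℝ)
    (huMAP : uMAP = ΓLap *ᵥ (Fmᵀ *ᵥ (ΓE⁻¹ *ᵥ (y - f - μE)) + Γpr⁻¹ *ᵥ μpr)) :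
    μpost = uMAP ∧ Γpost = ΓLap := by
  have hstat' : HasFDerivAt (alphaLoss Fm f y μE μpr Γpr ΓE α) 0 (μhat, Chat) :=
    (funext hL : L = alphaLoss Fm f y μE μpr Γpr ΓE α) ▸ hstat
  have hK : (Fmᵀ * ΓE⁻¹ * Fm + Γpr⁻¹).PosDef := by
    have := hΓE.inv.posSemidef.conjTranspose_mul_mul_same Fm
    rw [conjTranspose_eq_transpose_of_trivial] at this
    exact PosDef.posSemidef_add this hΓpr.inv
  have hprec := alphaLoss_precision_eq_of_hasFDerivAt hΓpr.isSymm hΓE.isSymm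
    (hΓhat ▸ hΓhatPD.isUnit) hstat'
  have hnormal := alphaLoss_normal_eq_of_hasFDerivAt hΓpr.isSymm hΓE.isSymm hstat'
  rw [← hΓhat] at hprec hnormal
  rw [show y - μE - Fm *ᵥ μhat - f = y - f - μE - Fm *ᵥ μhat by abel] at hnormal
  subst hA hμpost hΓpost hΓLap huMAP
  exact ⟨smul_inv_mulVec_add_eq_of_normal_eq hα.1.ne' hK.isUnit hnormal,
    mul_inv_smul_mul_eq_inv ((isUnit_iff_isUnit_det _).mp hΓhatPD.isUnit) hα.1.ne' hprec⟩
end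

section
/- Let F ∈ C¹(R^D, R^O), and for θ ≠ 0 let (μ̂(θ), Ĉ(θ)) satisfy the stationarity equation Γ_pr⁻¹(μ̂−μ_pr) − J_F(μ̂)ᵀ Γ_E⁻¹ (y − μ_E − F(μ̂)) + Σ_{k=1}^{D} (J_F(θĈ_{:,k}+μ̂) − J_F(μ̂))ᵀ Γ_E⁻¹ (F(θĈ_{:,k}+μ̂) − F(μ̂)) = 0. Suppose μ̂(θ) → μ̲ and Ĉ(θ) → C̲ as θ → 0, with μ̲ and C̲ bounded in norm. Then μ̲ satisfies Γ_pr⁻¹(μ̲ − μ_pr) − J_F(μ̲)ᵀ Γ_E⁻¹ (y − μ_E − F(μ̲)) = 0, i.e., μ̲ is a stationary point of u ↦ ‖y − F(u) − μ_E‖²_{Γ_E⁻¹} + ‖u − μ_pr‖²_{Γ_pr⁻¹}. -/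
open Matrix Filter Topology

/-- Let `F ∈ C¹(ℝ^D, ℝ^O)` with Jacobian `J_F` and for `θ ≠ 0` let
`(μ̂(θ), Ĉ(θ))` satisfy the stationarity equation
`Γ_pr⁻¹(μ̂−μ_pr) − J_F(μ̂)ᵀ Γ_E⁻¹ (y − μ_E − F(μ̂))
  + ∑ₖ (J_F(θĈ_{:,k}+μ̂) − J_F(μ̂))ᵀ Γ_E⁻¹ (F(θĈ_{:,k}+μ̂) − F(μ̂)) = 0`.
If `μ̂(θ) → μ̲` and `Ĉ(θ) → C̲` as `θ → 0`, then
`Γ_pr⁻¹(μ̲ − μ_pr) − J_F(μ̲)ᵀ Γ_E⁻¹ (y − μ_E − F(μ̲)) = 0`. -/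
theorem stmt8 {D O : ℕ}
    (Γpr : Matrix (Fin D) (Fin D) ℝ) (hΓpr : Γpr.PosDef)
    (ΓE : Matrix (Fin O) (Fin O) ℝ) (hΓE : ΓE.PosDef)
    (y μE : Fin O → ℝ) (μpr : Fin D → ℝ)
    (F : (Fin D → ℝ) → (Fin O → ℝ)) (hF : ContDiff ℝ 1 F)
    (JF : (Fin D → ℝ) → Matrix (Fin O) (Fin D) ℝ)
    (hJF : ∀ u, HasFDerivAt F (LinearMap.toContinuousLinearMap (JF u).mulVecLin) u)
    (μhat : ℝ → Fin D → ℝ) (Chat : ℝ → Fin D → Fin D → ℝ)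
    (hstat : ∀ θ : ℝ, θ ≠ 0 →
      Γpr⁻¹ *ᵥ (μhat θ - μpr) - (JF (μhat θ))ᵀ *ᵥ (ΓE⁻¹ *ᵥ (y - μE - F (μhat θ))) +
        ∑ k : Fin D,
          (JF (fun i => θ * Chat θ i k + μhat θ i) - JF (μhat θ))ᵀ *ᵥ
            (ΓE⁻¹ *ᵥ (F (fun i => θ * Chat θ i k + μhat θ i) - F (μhat θ))) = 0)
    (μlim : Fin D → ℝ) (hμlim : Tendsto μhat (𝓝[≠] (0 : ℝ)) (𝓝 μlim))
    (Clim : Fin D → Fin D → ℝ) (hClim : Tendsto Chat (𝓝[≠] (0 : ℝ)) (𝓝 Clim))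
    (hμbound : ∃ R : ℝ, ‖μlim‖ ≤ R) (hCbound : ∃ R : ℝ, ‖Clim‖ ≤ R) :
    Γpr⁻¹ *ᵥ (μlim - μpr) - (JF μlim)ᵀ *ᵥ (ΓE⁻¹ *ᵥ (y - μE - F μlim)) = 0 := by
  -- continuity of F
  have hFc : Continuous F := hF.continuous
  -- continuity of the Jacobian
  have hJFeq : ∀ u, JF u = Matrix.of fun i j => fderiv ℝ F u (Pi.single j 1) i := by
    intro u
    have h := (hJF u).fderiv
    ext i j
    rw [h]
    simp [Matrix.mulVecLin]
  have hfd : Continuous (fderiv ℝ F) := (contDiff_one_iff_fderiv.mp hF).2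
  have hJFc : Continuous JF := by
    have : Continuous fun u => Matrix.of fun i j => fderiv ℝ F u (Pi.single j 1) i := by
      refine continuous_pi fun i => continuous_pi fun j => ?_
      exact (continuous_apply i).comp
        ((ContinuousLinearMap.apply ℝ (Fin O → ℝ) (Pi.single j 1)).continuous.comp hfd)
    convert this using 1
    funext u
    exact hJFeq u
  -- the full stationarity expression as a continuous function
  set Φ : ℝ × (Fin D → ℝ) × (Fin D → Fin D → ℝ) → (Fin D → ℝ) := fun p =>
    Γpr⁻¹ *ᵥ (p.2.1 - μpr) - (JF p.2.1)ᵀ *ᵥ (ΓE⁻¹ *ᵥ (y - μE - F p.2.1)) +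
      ∑ k : Fin D,
        (JF (fun i => p.1 * p.2.2 i k + p.2.1 i) - JF p.2.1)ᵀ *ᵥ
          (ΓE⁻¹ *ᵥ (F (fun i => p.1 * p.2.2 i k + p.2.1 i) - F p.2.1)) with hΦ
  have hμc' : Continuous fun p : ℝ × (Fin D → ℝ) × (Fin D → Fin D → ℝ) => p.2.1 := by
    fun_prop
  have hvc : ∀ k : Fin D, Continuous fun p : ℝ × (Fin D → ℝ) × (Fin D → Fin D → ℝ) =>
      (fun i => p.1 * p.2.2 i k + p.2.1 i) := by
    intro k
    fun_prop
  have hΦc : Continuous Φ := by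
    rw [hΦ]
    refine Continuous.add ?_ ?_
    · refine Continuous.sub ?_ ?_
      · exact (continuous_const.matrix_mulVec (hμc'.sub continuous_const))
      · exact ((hJFc.comp hμc').matrix_transpose).matrix_mulVec
          (continuous_const.matrix_mulVec (continuous_const.sub (hFc.comp hμc')))
    · refine continuous_finset_sum _ fun k _ => ?_
      exact (((hJFc.comp (hvc k)).sub (hJFc.comp hμc')).matrix_transpose).matrix_mulVec
        (continuous_const.matrix_mulVec ((hFc.comp (hvc k)).sub (hFc.comp hμc')))
  -- limit of the parameters
  have hp : Tendsto (fun θ => (θ, μhat θ, Chat θ)) (𝓝[≠] (0 : ℝ))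
      (𝓝 ((0 : ℝ), μlim, Clim)) := by
    exact (tendsto_id.mono_left nhdsWithin_le_nhds).prodMk_nhds (hμlim.prodMk_nhds hClim)
  have hG : Tendsto (fun θ => Φ (θ, μhat θ, Chat θ)) (𝓝[≠] (0 : ℝ))
      (𝓝 (Φ (0, μlim, Clim))) := (hΦc.tendsto _).comp hp
  -- the function is eventually 0
  have hev : (fun θ => Φ (θ, μhat θ, Chat θ)) =ᶠ[𝓝[≠] (0 : ℝ)] fun _ => 0 := by
    filter_upwards [self_mem_nhdsWithin] with θ hθ
    exact hstat θ hθ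
  have h0 : Tendsto (fun _ : ℝ => (0 : Fin D → ℝ)) (𝓝[≠] (0 : ℝ)) (𝓝 (Φ (0, μlim, Clim))) :=
    hG.congr' hev
  have hΦ0 : Φ (0, μlim, Clim) = 0 := tendsto_nhds_unique h0 tendsto_const_nhds
  -- simplify Φ at the limit point
  rw [hΦ] at hΦ0
  simp only at hΦ0
  have hfix' : ∀ k : Fin D, (fun i => (0 : ℝ) * Clim i k + μlim i) = μlim := by
    intro k; funext i; simp
  simp only [hfix'] at hΦ0
  simpa using hΦ0
end

section
/- Let F ∈ C¹(R^D, R^O) and suppose C(θ) → C̲ as θ → 0 with C̲ invertible, μ(θ) → μ̲. Assume that for every θ ≠ 0 the matrix equation −Γ(θ)⁻¹ Γ_pr Γ(θ)⁻¹ + Γ_pr⁻¹ + (1/θ) [J_F(θC_{:,1}+μ)ᵀ Γ_E⁻¹ (F(θC_{:,1}+μ) − F(μ)) ⋯ ] C(θ)⁻¹ = 0 holds, where Γ(θ) = C(θ)C(θ)ᵀ. Then the limit matrix Γ̲ = C̲C̲ᵀ satisfies Γ̲⁻¹ Γ_pr Γ̲⁻¹ = Γ_pr⁻¹ + J_F(μ̲)ᵀ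 Γ_E⁻¹ J_F(μ̲). -/
open Matrix Filter Topology Asymptotics

/-! Write `G(θ)` for the matrix whose `k`-th column is `J_F(x_k)ᵀ Γ_E⁻¹ (F(x_k) − F(μ))` with
`x_k = θ C_{:,k} + μ`, so the hypothesis says `Γ(θ)⁻¹ Γ_pr Γ(θ)⁻¹ − Γ_pr⁻¹ = θ⁻¹ G(θ) C(θ)⁻¹`.
The left side tends to `Γ̲⁻¹ Γ_pr Γ̲⁻¹ − Γ_pr⁻¹` by continuity of inversion at the invertible `Γ̲`.
On the right, both `x_k` and `μ` move towards `μ̲`, so the quotient `θ⁻¹ (F(x_k) − F(μ))` is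
controlled by the *strict* derivative of the `C¹` map `F` at `μ̲` and tends to `J_F(μ̲) C̲_{:,k}`;
with continuity of `J_F` this gives `θ⁻¹ G(θ) C(θ)⁻¹ → J_F(μ̲)ᵀ Γ_E⁻¹ J_F(μ̲) C̲ C̲⁻¹`. -/

theorem Filter.Tendsto.matrix_inv {α K n : Type*} [Fintype n] [DecidableEq n] [Field K]
    [TopologicalSpace K] [IsTopologicalRing K] [ContinuousInv₀ K] {l : Filter α}
    {A : α → Matrix n n K} {B : Matrix n n K} (hA : Tendsto A l (𝓝 B)) (hB : B.det ≠ 0) :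
    Tendsto (fun x => (A x)⁻¹) l (𝓝 B⁻¹) := by
  refine ((continuousAt_matrix_inv B ?_).tendsto).comp hA
  rw [Ring.inverse_eq_inv']
  exact continuousAt_inv₀ hB

theorem Filter.Tendsto.matrix_mulVec {α R m n : Type*} [Fintype n] [NonUnitalNonAssocSemiring R]
    [TopologicalSpace R] [ContinuousAdd R] [ContinuousMul R] {l : Filter α}
    {A : α → Matrix m n R} {v : α → n → R} {A₀ : Matrix m n R} {v₀ : n → R}
    (hA : Tendsto A l (𝓝 A₀)) (hv : Tendsto v l (𝓝 v₀)) :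
    Tendsto (fun x => A x *ᵥ v x) l (𝓝 (A₀ *ᵥ v₀)) :=
  ((continuous_fst.matrix_mulVec continuous_snd).tendsto (A₀, v₀)).comp (hA.prodMk_nhds hv)

theorem HasStrictFDerivAt.tendsto_inv_smul_sub {𝕜 E G : Type*} [NontriviallyNormedField 𝕜]
    [NormedAddCommGroup E] [NormedSpace 𝕜 E] [NormedAddCommGroup G] [NormedSpace 𝕜 G]
    {f : E → G} {f' : E →L[𝕜] G} {a : E} (hf : HasStrictFDerivAt f f' a)
    {μ v : 𝕜 → E} {v₀ : E} (hμ : Tendsto μ (𝓝[≠] 0) (𝓝 a)) (hv : Tendsto v (𝓝[≠] 0) (𝓝 v₀)) :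
    Tendsto (fun θ => θ⁻¹ • (f (θ • v θ + μ θ) - f (μ θ))) (𝓝[≠] 0) (𝓝 (f' v₀)) := by
  have hθ : Tendsto (fun θ : 𝕜 => θ) (𝓝[≠] 0) (𝓝 0) :=
    tendsto_nhdsWithin_of_tendsto_nhds tendsto_id
  have hx : Tendsto (fun θ => θ • v θ + μ θ) (𝓝[≠] 0) (𝓝 a) := by
    simpa using (hθ.smul hv).add hμ
  have hsmul : (fun θ => θ • v θ) =O[𝓝[≠] 0] fun θ => θ := by
    simpa using (isBigO_refl (fun θ : 𝕜 => θ) _).smul (hv.isBigO_one 𝕜)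
  have hrem : (fun θ => f (θ • v θ + μ θ) - f (μ θ) - f' (θ • v θ)) =o[𝓝[≠] 0] fun θ => θ := by
    have h := hf.isLittleO.comp_tendsto (hx.prodMk_nhds hμ)
    simp only [Function.comp_def, add_sub_cancel_right] at h
    exact h.trans_isBigO hsmul
  have hlim : Tendsto (fun θ => θ⁻¹ • (f (θ • v θ + μ θ) - f (μ θ) - f' (θ • v θ)) + f' (v θ))
      (𝓝[≠] 0) (𝓝 (f' v₀)) := by
    simpa using hrem.tendsto_inv_smul_nhds_zero.add ((f'.continuous.tendsto v₀).comp hv)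
  refine hlim.congr' ?_
  filter_upwards [self_mem_nhdsWithin] with θ hθ
  rw [map_smul, smul_sub, smul_smul, inv_mul_cancel₀ hθ, one_smul, sub_add_cancel]

theorem continuous_of_hasFDerivAt_mulVecLin {m n : Type*} [Fintype m] [Fintype n] [DecidableEq n]
    {F : (n → ℝ) → m → ℝ} (hF : ContDiff ℝ 1 F) {J : (n → ℝ) → Matrix m n ℝ}
    (hJ : ∀ u, HasFDerivAt F (J u).mulVecLin.toContinuousLinearMap u) : Continuous J := by
  have hJ_eq : J = fun u => LinearMap.toMatrix' (fderiv ℝ F u : (n → ℝ) →ₗ[ℝ] m → ℝ) := by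
    funext u
    rw [(hJ u).fderiv]
    exact (LinearMap.toMatrix'_toLin' _).symm
  rw [hJ_eq]
  exact (LinearMap.toMatrix'.toLinearMap ∘ₗ ContinuousLinearMap.coeLM ℝ
    |>.continuous_of_finiteDimensional).comp (hF.continuous_fderiv one_ne_zero)

def misfitGradientMatrix {m n : Type*} [Fintype m] [Fintype n] (F : (n → ℝ) → m → ℝ)
    (J : (n → ℝ) → Matrix m n ℝ) (W : Matrix m m ℝ) (C : Matrix n n ℝ) (μ : n → ℝ) (θ : ℝ) :
    Matrix n n ℝ :=
  Matrix.of fun i k => ((J (θ • Cᵀ k + μ))ᵀ *ᵥ (W *ᵥ (F (θ • Cᵀ k + μ) - F μ))) i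

theorem tendsto_inv_smul_misfitGradientMatrix {m n : Type*} [Fintype m] [Fintype n]
    {F : (n → ℝ) → m → ℝ} {J : (n → ℝ) → Matrix m n ℝ} {W : Matrix m m ℝ} {μ₀ : n → ℝ}
    {C₀ : Matrix n n ℝ} {μ : ℝ → n → ℝ} {C : ℝ → Matrix n n ℝ}
    (hF : HasStrictFDerivAt F (J μ₀).mulVecLin.toContinuousLinearMap μ₀) (hJ : ContinuousAt J μ₀)
    (hμ : Tendsto μ (𝓝[≠] 0) (𝓝 μ₀)) (hC : Tendsto C (𝓝[≠] 0) (𝓝 C₀)) :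
    Tendsto (fun θ => θ⁻¹ • misfitGradientMatrix F J W (C θ) (μ θ) θ) (𝓝[≠] 0)
      (𝓝 ((J μ₀)ᵀ * W * J μ₀ * C₀)) := by
  have hCt : Tendsto (fun θ => (C θ)ᵀ) (𝓝[≠] 0) (𝓝 C₀ᵀ) :=
    (continuous_id.matrix_transpose.tendsto C₀).comp hC
  refine tendsto_pi_nhds.2 fun i => tendsto_pi_nhds.2 fun k => ?_
  have hcol : Tendsto (fun θ => (C θ)ᵀ k) (𝓝[≠] 0) (𝓝 (C₀ᵀ k)) := tendsto_pi_nhds.1 hCt k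
  have hx : Tendsto (fun θ => θ • (C θ)ᵀ k + μ θ) (𝓝[≠] 0) (𝓝 μ₀) := by
    simpa using ((tendsto_nhdsWithin_of_tendsto_nhds tendsto_id).smul hcol).add hμ
  have hJx : Tendsto (fun θ => (J (θ • (C θ)ᵀ k + μ θ))ᵀ) (𝓝[≠] 0) (𝓝 (J μ₀)ᵀ) :=
    (continuous_id.matrix_transpose.tendsto _).comp (hJ.tendsto.comp hx)
  have hquot := hF.tendsto_inv_smul_sub (v := fun θ => (C θ)ᵀ k) hμ hcol
  have hcolumn :=
    tendsto_pi_nhds.1 (hJx.matrix_mulVec ((tendsto_const_nhds (x := W)).matrix_mulVec hquot)) i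
  convert hcolumn using 2
  · simp [misfitGradientMatrix, mulVec_smul]
  · rw [LinearMap.coe_toContinuousLinearMap', mulVecLin_apply, mulVec_mulVec, mulVec_mulVec]
    rfl

theorem stmt9_general {D O : ℕ}
    (Γpr : Matrix (Fin D) (Fin D) ℝ)
    (ΓE : Matrix (Fin O) (Fin O) ℝ)
    (F : (Fin D → ℝ) → (Fin O → ℝ)) (hF : ContDiff ℝ 1 F)
    (JF : (Fin D → ℝ) → Matrix (Fin O) (Fin D) ℝ)
    (hJF : ∀ u, HasFDerivAt F (LinearMap.toContinuousLinearMap (JF u).mulVecLin) u)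
    (μ : ℝ → Fin D → ℝ) (C : ℝ → Fin D → Fin D → ℝ)
    (μlim : Fin D → ℝ) (hμlim : Tendsto μ (𝓝[≠] (0 : ℝ)) (𝓝 μlim))
    (Clim : Fin D → Fin D → ℝ) (hClim : Tendsto C (𝓝[≠] (0 : ℝ)) (𝓝 Clim))
    (hClimInv : IsUnit (Matrix.of Clim).det)
    (hstat : ∀ θ : ℝ, θ ≠ 0 →
      -((Matrix.of (C θ) * (Matrix.of (C θ))ᵀ)⁻¹ * Γpr *
          (Matrix.of (C θ) * (Matrix.of (C θ))ᵀ)⁻¹) + Γpr⁻¹ +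
        (1 / θ) •
          ((Matrix.of fun i k =>
              ((JF (fun j => θ * C θ j k + μ θ j))ᵀ *ᵥ
                (ΓE⁻¹ *ᵥ (F (fun j => θ * C θ j k + μ θ j) - F (μ θ)))) i) *
            (Matrix.of (C θ))⁻¹) = 0) :
    (Matrix.of Clim * (Matrix.of Clim)ᵀ)⁻¹ * Γpr * (Matrix.of Clim * (Matrix.of Clim)ᵀ)⁻¹ =
      Γpr⁻¹ + (JF μlim)ᵀ * ΓE⁻¹ * JF μlim := by
  have hC : Tendsto (fun θ => Matrix.of (C θ)) (𝓝[≠] 0) (𝓝 (Matrix.of Clim)) := hClim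
  have hdet : (Matrix.of Clim).det ≠ 0 := hClimInv.ne_zero
  have hΓinv : Tendsto (fun θ => (Matrix.of (C θ) * (Matrix.of (C θ))ᵀ)⁻¹) (𝓝[≠] 0)
      (𝓝 (Matrix.of Clim * (Matrix.of Clim)ᵀ)⁻¹) :=
    (((continuous_id.matrix_mul continuous_id.matrix_transpose).tendsto _).comp hC).matrix_inv
      (by rw [det_mul, det_transpose]; exact mul_ne_zero hdet hdet)
  have hstrict : HasStrictFDerivAt F (JF μlim).mulVecLin.toContinuousLinearMap μlim :=
    (hJF μlim).fderiv ▸ hF.contDiffAt.hasStrictFDerivAt one_ne_zero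
  have hgrad := (tendsto_inv_smul_misfitGradientMatrix (W := ΓE⁻¹) hstrict
    (continuous_of_hasFDerivAt_mulVecLin hF hJF).continuousAt hμlim hC).mul (hC.matrix_inv hdet)
  rw [mul_assoc _ (Matrix.of Clim), mul_nonsing_inv _ hClimInv, mul_one] at hgrad
  have hstationary : ∀ᶠ θ in 𝓝[≠] 0,
      (Matrix.of (C θ) * (Matrix.of (C θ))ᵀ)⁻¹ * Γpr * (Matrix.of (C θ) * (Matrix.of (C θ))ᵀ)⁻¹
        - Γpr⁻¹ = θ⁻¹ • misfitGradientMatrix F JF ΓE⁻¹ (Matrix.of (C θ)) (μ θ) θ *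
          (Matrix.of (C θ))⁻¹ := by
    filter_upwards [self_mem_nhdsWithin] with θ hθ
    have h := eq_neg_of_add_eq_zero_right (hstat θ hθ)
    rw [neg_add, neg_neg, ← sub_eq_add_neg, one_div, ← smul_mul_assoc] at h
    exact h.symm
  have hlimit := tendsto_nhds_unique
    ((((hΓinv.mul tendsto_const_nhds).mul hΓinv).sub tendsto_const_nhds).congr' hstationary) hgrad
  rw [← hlimit, add_sub_cancel]

/-- Let `F ∈ C¹(ℝ^D, ℝ^O)` with Jacobian `J_F`, `C(θ) → C̲` invertible,
`μ(θ) → μ̲` as `θ → 0`. If for every `θ ≠ 0`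
`−Γ(θ)⁻¹ Γ_pr Γ(θ)⁻¹ + Γ_pr⁻¹ + (1/θ)[J_F(θC_{:,k}+μ)ᵀ Γ_E⁻¹ (F(θC_{:,k}+μ) − F(μ))]ₖ C(θ)⁻¹ = 0`
with `Γ(θ) = C(θ)C(θ)ᵀ`, then `Γ̲ = C̲C̲ᵀ` satisfies
`Γ̲⁻¹ Γ_pr Γ̲⁻¹ = Γ_pr⁻¹ + J_F(μ̲)ᵀ Γ_E⁻¹ J_F(μ̲)`. -/
theorem stmt9 {D O : ℕ}
    (Γpr : Matrix (Fin D) (Fin D) ℝ) (hΓpr : Γpr.PosDef)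
    (ΓE : Matrix (Fin O) (Fin O) ℝ) (hΓE : ΓE.PosDef)
    (F : (Fin D → ℝ) → (Fin O → ℝ)) (hF : ContDiff ℝ 1 F)
    (JF : (Fin D → ℝ) → Matrix (Fin O) (Fin D) ℝ)
    (hJF : ∀ u, HasFDerivAt F (LinearMap.toContinuousLinearMap (JF u).mulVecLin) u)
    (μ : ℝ → Fin D → ℝ) (C : ℝ → Fin D → Fin D → ℝ)
    (μlim : Fin D → ℝ) (hμlim : Tendsto μ (𝓝[≠] (0 : ℝ)) (𝓝 μlim))
    (Clim : Fin D → Fin D → ℝ) (hClim : Tendsto C (𝓝[≠] (0 : ℝ)) (𝓝 Clim))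
    (hClimInv : IsUnit (Matrix.of Clim).det)
    (hstat : ∀ θ : ℝ, θ ≠ 0 →
      -((Matrix.of (C θ) * (Matrix.of (C θ))ᵀ)⁻¹ * Γpr *
          (Matrix.of (C θ) * (Matrix.of (C θ))ᵀ)⁻¹) + Γpr⁻¹ +
        (1 / θ) •
          ((Matrix.of fun i k =>
              ((JF (fun j => θ * C θ j k + μ θ j))ᵀ *ᵥ
                (ΓE⁻¹ *ᵥ (F (fun j => θ * C θ j k + μ θ j) - F (μ θ)))) i) *
            (Matrix.of (C θ))⁻¹) = 0) :
    (Matrix.of Clim * (Matrix.of Clim)ᵀ)⁻¹ * Γpr * (Matrix.of Clim * (Matrix.of Clim)ᵀ)⁻¹ =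
      Γpr⁻¹ + (JF μlim)ᵀ * ΓE⁻¹ * JF μlim :=
  stmt9_general Γpr ΓE F hF JF hJF μ C μlim hμlim Clim hClim hClimInv hstat
end
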